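/- arXiv:1509.08575 — 8 statements merged into one kernel-verified Lean document; each statement's English description precedes it below -/
import Mathlib

section
/- Let V = {1, 2, …, n} with n ≥ 4, let f be a skew-supermodular function on the subsets of V, let d be an integer with 4 ≤ d ≤ n−1, and suppose that f([1,d−1]) + f([2,d]) ≤ f([2,d−1]) + f([1,d]). Then there exists an integer k with 2 ≤ k ≤ d−1 such that: (i) f([1,l]) + f([2,l+1]) ≤ f([2,l]) + f([1,l+1]) for every l with k ≤ l ≤ d−1; (ii) f([1,k−1]) + f([2,k]) ≤ f({1}) + f({k}); and (iii) f([1,k]) + f([2,d]) ≤ f([1,d]) + f([2,k]). -/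
/-- For `V = {1, …, n}` with `n ≥ 4`, a skew-supermodular `f` on the subsets of `V`,
and `4 ≤ d ≤ n - 1` with `f([1,d-1]) + f([2,d]) ≤ f([2,d-1]) + f([1,d])`, there exists
`k` with `2 ≤ k ≤ d - 1` such that
(i) `f([1,l]) + f([2,l+1]) ≤ f([2,l]) + f([1,l+1])` for all `k ≤ l ≤ d - 1`;
(ii) `f([1,k-1]) + f([2,k]) ≤ f({1}) + f({k})`;
(iii) `f([1,k]) + f([2,d]) ≤ f([1,d]) + f([2,k])`. -/
theorem exists_index_k (n : ℕ) (hn : 4 ≤ n)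
    (f : Finset ℕ → ℝ) (hf0 : ∀ X, 0 ≤ f X)
    (hf : ∀ X Y : Finset ℕ, X ⊆ Finset.Icc 1 n → Y ⊆ Finset.Icc 1 n →
      f X + f Y ≤ max (f (X ∩ Y) + f (X ∪ Y)) (f (X \ Y) + f (Y \ X)))
    (d : ℕ) (hd4 : 4 ≤ d) (hdn : d ≤ n - 1)
    (hd : f (Finset.Icc 1 (d - 1)) + f (Finset.Icc 2 d) ≤
      f (Finset.Icc 2 (d - 1)) + f (Finset.Icc 1 d)) :
    ∃ k : ℕ, 2 ≤ k ∧ k ≤ d - 1 ∧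
      (∀ l : ℕ, k ≤ l → l ≤ d - 1 →
        f (Finset.Icc 1 l) + f (Finset.Icc 2 (l + 1)) ≤
          f (Finset.Icc 2 l) + f (Finset.Icc 1 (l + 1))) ∧
      (f (Finset.Icc 1 (k - 1)) + f (Finset.Icc 2 k) ≤ f {1} + f {k}) ∧
      (f (Finset.Icc 1 k) + f (Finset.Icc 2 d) ≤
        f (Finset.Icc 1 d) + f (Finset.Icc 2 k)) := by
  -- telescoping lemma for (iii)
  have tele : ∀ j k : ℕ, k + j = d → 2 ≤ k →
      (∀ l : ℕ, k ≤ l → l ≤ d - 1 →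
        f (Finset.Icc 1 l) + f (Finset.Icc 2 (l + 1)) ≤
          f (Finset.Icc 2 l) + f (Finset.Icc 1 (l + 1))) →
      f (Finset.Icc 1 k) + f (Finset.Icc 2 d) ≤
        f (Finset.Icc 1 d) + f (Finset.Icc 2 k) := by
    intro j
    induction j with
    | zero =>
      intro k hkd _ _
      have : k = d := by omega
      subst this
      linarith
    | succ j ih =>
      intro k hkd h2 hPl
      have h1 := hPl k le_rfl (by omega)
      have h2' := ih (k + 1) (by omega) (by omega) (fun l hl hl' => hPl l (by omega) hl')
      linarith
  have aux : ∀ k : ℕ, 2 ≤ k → k ≤ d - 1 →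
      (∀ l : ℕ, k ≤ l → l ≤ d - 1 →
        f (Finset.Icc 1 l) + f (Finset.Icc 2 (l + 1)) ≤
          f (Finset.Icc 2 l) + f (Finset.Icc 1 (l + 1))) →
      ∃ k : ℕ, 2 ≤ k ∧ k ≤ d - 1 ∧
      (∀ l : ℕ, k ≤ l → l ≤ d - 1 →
        f (Finset.Icc 1 l) + f (Finset.Icc 2 (l + 1)) ≤
          f (Finset.Icc 2 l) + f (Finset.Icc 1 (l + 1))) ∧
      (f (Finset.Icc 1 (k - 1)) + f (Finset.Icc 2 k) ≤ f {1} + f {k}) ∧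
      (f (Finset.Icc 1 k) + f (Finset.Icc 2 d) ≤
        f (Finset.Icc 1 d) + f (Finset.Icc 2 k)) := by
    intro k
    induction k using Nat.strong_induction_on with
    | _ k ih =>
      intro h2 hk hPl
      rcases eq_or_lt_of_le h2 with heq | hlt
      · -- k = 2
        subst heq
        refine ⟨2, le_rfl, by omega, hPl, ?_, tele (d - 2) 2 (by omega) le_rfl hPl⟩
        rw [show (2 : ℕ) - 1 = 1 from rfl, Finset.Icc_self, Finset.Icc_self]
      · -- 2 < k
        by_cases hp : f (Finset.Icc 1 (k - 1)) + f (Finset.Icc 2 k) ≤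
            f (Finset.Icc 2 (k - 1)) + f (Finset.Icc 1 k)
        · apply ih (k - 1) (by omega) (by omega) (by omega)
          intro l hl hl'
          by_cases hlk : k ≤ l
          · exact hPl l hlk hl'
          · have : l = k - 1 := by omega
            subst this
            rw [show k - 1 + 1 = k from by omega]
            exact hp
        · refine ⟨k, h2, hk, hPl, ?_, tele (d - k) k (by omega) h2 hPl⟩
          have hsub1 : Finset.Icc 1 (k - 1) ⊆ Finset.Icc 1 n :=
            Finset.Icc_subset_Icc le_rfl (by omega)
          have hsub2 : Finset.Icc 2 k ⊆ Finset.Icc 1 n :=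
            Finset.Icc_subset_Icc (by omega) (by omega)
          have h := hf _ _ hsub1 hsub2
          have e1 : Finset.Icc 1 (k - 1) ∩ Finset.Icc 2 k = Finset.Icc 2 (k - 1) := by
            ext x; simp [Finset.mem_Icc]; omega
          have e2 : Finset.Icc 1 (k - 1) ∪ Finset.Icc 2 k = Finset.Icc 1 k := by
            ext x; simp [Finset.mem_Icc]; omega
          have e3 : Finset.Icc 1 (k - 1) \ Finset.Icc 2 k = {1} := by
            ext x; simp [Finset.mem_Icc]; omega
          have e4 : Finset.Icc 2 k \ Finset.Icc 1 (k - 1) = {k} := by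
            ext x; simp [Finset.mem_Icc]; omega
          rw [e1, e2, e3, e4] at h
          rcases le_max_iff.mp h with h' | h'
          · exact absurd h' hp
          · exact h'
  apply aux (d - 1) (by omega) le_rfl
  intro l hl hl'
  have : l = d - 1 := by omega
  subst this
  rw [Nat.sub_add_cancel (by omega)]
  exact hd
end

section
/- Let G = (V,E) be a finite undirected graph with edge costs a: E → ℝ≥0, let f be a skew-supermodular function on the subsets of V, and let λ be a dual feasible function. Let X, Y be a crossing pair with λ(X) > 0 and λ(Y) > 0, and let λ' be obtained from λ by an uncrossing step at X, Y. Then λ' is nonnegative, λ' is dual feasible, and the objective value of λ' is at least the objective value of λ. -/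
open scoped Classical

/-- Two subsets `X Y` of a finite set `V` are *crossing* if `X ∩ Y`, `X \ Y`, `Y \ X`
and `V \ (X ∪ Y)` are all nonempty. -/
def Crossing {V : Type*} [Fintype V] [DecidableEq V] (X Y : Finset V) : Prop :=
  (X ∩ Y).Nonempty ∧ (X \ Y).Nonempty ∧ (Y \ X).Nonempty ∧ ((X ∪ Y)ᶜ).Nonempty

/-- An uncrossing step preserves nonnegativity and dual feasibility, and does not
decrease the dual objective value.

The graph `G = (V,E)` is modelled by a finite edge type `E` with endpoint maps
`u v : E → V`; an edge `e` is in `δX` iff exactly one of its endpoints lies in `X`.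
The uncrossing step at a crossing pair `X, Y` with `lam X, lam Y > 0` decreases `lam`
by `α = min (lam X) (lam Y)` at `X` and at `Y` and increases it by `α` at `X'` and `Y'`,
where `(X', Y')` is one of `(X ∩ Y, X ∪ Y)`, `(X \ Y, Y \ X)` with
`f X + f Y ≤ f X' + f Y'`. -/
theorem uncrossing_step_feasible {V E : Type*} [Fintype V] [DecidableEq V] [Fintype E]
    (u v : E → V) (a : E → ℝ) (ha : ∀ e, 0 ≤ a e)
    (f : Finset V → ℝ) (hf0 : ∀ X, 0 ≤ f X)
    (hf : ∀ X Y : Finset V,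
      f X + f Y ≤ max (f (X ∩ Y) + f (X ∪ Y)) (f (X \ Y) + f (Y \ X)))
    (lam : Finset V → ℝ) (hlam0 : ∀ W, 0 ≤ lam W)
    (hfeas : ∀ e : E,
      (∑ W : Finset V, if ¬ (u e ∈ W ↔ v e ∈ W) then lam W else 0) ≤ a e)
    (X Y : Finset V) (hXY : Crossing X Y) (hX : 0 < lam X) (hY : 0 < lam Y)
    (X' Y' : Finset V)
    (hX'Y' : (X' = X ∩ Y ∧ Y' = X ∪ Y) ∨ (X' = X \ Y ∧ Y' = Y \ X))
    (hfXY : f X + f Y ≤ f X' + f Y')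
    (lam' : Finset V → ℝ)
    (hlam' : ∀ W : Finset V,
      lam' W = lam W
        - (if W = X then min (lam X) (lam Y) else 0)
        - (if W = Y then min (lam X) (lam Y) else 0)
        + (if W = X' then min (lam X) (lam Y) else 0)
        + (if W = Y' then min (lam X) (lam Y) else 0)) :
    (∀ W, 0 ≤ lam' W) ∧
      (∀ e : E,
        (∑ W : Finset V, if ¬ (u e ∈ W ↔ v e ∈ W) then lam' W else 0) ≤ a e) ∧
      (∑ W : Finset V, lam W * f W) ≤ (∑ W : Finset V, lam' W * f W) := by

  set α := min (lam X) (lam Y) with hα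
  have hα0 : 0 ≤ α := le_min hX.le hY.le
  have hαX : α ≤ lam X := min_le_left _ _
  have hαY : α ≤ lam Y := min_le_right _ _
  have hne : X ≠ Y := by
    rintro rfl
    simpa using hXY.2.1
  refine ⟨?_, ?_, ?_⟩
  · intro W
    rw [hlam' W]
    have h3 : (0:ℝ) ≤ if W = X' then α else 0 := by split_ifs <;> simp [hα0]
    have h4 : (0:ℝ) ≤ if W = Y' then α else 0 := by split_ifs <;> simp [hα0]
    by_cases h1 : W = X
    · subst h1
      simp only [if_pos rfl, if_neg hne, if_true]
      linarith [hlam0 W]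
    · by_cases h2 : W = Y
      · subst h2
        simp only [if_pos rfl, if_neg h1, if_true]
        linarith [hlam0 W]
      · simp only [if_neg h1, if_neg h2]
        linarith [hlam0 W]
  · intro e
    have hswap : ∀ Z : Finset V,
        (∑ W : Finset V, if ¬ (u e ∈ W ↔ v e ∈ W) then (if W = Z then α else 0) else 0)
          = (if ¬ (u e ∈ Z ↔ v e ∈ Z) then α else 0) := by
      intro Z
      have : ∀ W : Finset V,
          (if ¬ (u e ∈ W ↔ v e ∈ W) then (if W = Z then α else 0) else 0)
            = (if W = Z then (if ¬ (u e ∈ Z ↔ v e ∈ Z) then α else 0) else 0) := by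
        intro W
        by_cases h : W = Z
        · subst h; split_ifs <;> simp
        · simp [h]
      rw [Finset.sum_congr rfl fun W _ => this W, Finset.sum_ite_eq']
      simp
    have hsplit : (∑ W : Finset V, if ¬ (u e ∈ W ↔ v e ∈ W) then lam' W else 0)
        = (∑ W : Finset V, if ¬ (u e ∈ W ↔ v e ∈ W) then lam W else 0)
          - (if ¬ (u e ∈ X ↔ v e ∈ X) then α else 0)
          - (if ¬ (u e ∈ Y ↔ v e ∈ Y) then α else 0)
          + (if ¬ (u e ∈ X' ↔ v e ∈ X') then α else 0)
          + (if ¬ (u e ∈ Y' ↔ v e ∈ Y') then α else 0) := by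
      rw [← hswap X, ← hswap Y, ← hswap X', ← hswap Y']
      rw [← Finset.sum_sub_distrib, ← Finset.sum_sub_distrib,
        ← Finset.sum_add_distrib, ← Finset.sum_add_distrib]
      refine Finset.sum_congr rfl fun W _ => ?_
      rw [hlam' W]
      split_ifs <;> ring
    have key : (if ¬ (u e ∈ X' ↔ v e ∈ X') then α else 0)
          + (if ¬ (u e ∈ Y' ↔ v e ∈ Y') then α else 0)
        ≤ (if ¬ (u e ∈ X ↔ v e ∈ X) then α else 0)
          + (if ¬ (u e ∈ Y ↔ v e ∈ Y) then α else 0) := by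
      rcases hX'Y' with ⟨h1, h2⟩ | ⟨h1, h2⟩ <;> subst h1 <;> subst h2 <;>
        by_cases h1 : u e ∈ X <;> by_cases h2 : u e ∈ Y <;>
        by_cases h3 : v e ∈ X <;> by_cases h4 : v e ∈ Y <;>
        simp [Finset.mem_inter, Finset.mem_union, Finset.mem_sdiff,
          h1, h2, h3, h4, hα0] <;> linarith
    have := hfeas e
    linarith [hsplit, key, this]
  · have hswap : ∀ Z : Finset V,
        (∑ W : Finset V, (if W = Z then α else 0) * f W) = α * f Z := by
      intro Z
      have : ∀ W : Finset V,
          (if W = Z then α else 0) * f W = (if W = Z then α * f Z else 0) := by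
        intro W
        by_cases h : W = Z
        · subst h; simp
        · simp [h]
      rw [Finset.sum_congr rfl fun W _ => this W, Finset.sum_ite_eq']
      simp
    have hsplit : (∑ W : Finset V, lam' W * f W)
        = (∑ W : Finset V, lam W * f W) - α * f X - α * f Y + α * f X' + α * f Y' := by
      rw [← hswap X, ← hswap Y, ← hswap X', ← hswap Y']
      rw [← Finset.sum_sub_distrib, ← Finset.sum_sub_distrib,
        ← Finset.sum_add_distrib, ← Finset.sum_add_distrib]
      refine Finset.sum_congr rfl fun W _ => ?_
      rw [hlam' W]
      ring
    have hgain : 0 ≤ α * (f X' + f Y' - f X - f Y) :=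
      mul_nonneg hα0 (by linarith)
    rw [hsplit]
    linarith
end

section
/- Let V be a finite set and let X, Y ⊆ V. Then |X|·|V\X| + |Y|·|V\Y| = |X∩Y|·|V\(X∩Y)| + |X∪Y|·|V\(X∪Y)| + 2·|X\Y|·|Y\X|. In particular, if X and Y are crossing, then |X∩Y|·|V\(X∩Y)| + |X∪Y|·|V\(X∪Y)| < |X|·|V\X| + |Y|·|V\Y|. -/
/-- `|X|·|V\X| + |Y|·|V\Y| = |X∩Y|·|V\(X∩Y)| + |X∪Y|·|V\(X∪Y)| + 2·|X\Y|·|Y\X|`;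
in particular, for a crossing pair the intersection/union uncrossing strictly
decreases the potential. -/
theorem card_potential_inter_union {V : Type*} [Fintype V] [DecidableEq V]
    (X Y : Finset V) :
    (X.card * Xᶜ.card + Y.card * Yᶜ.card =
      (X ∩ Y).card * (X ∩ Y)ᶜ.card + (X ∪ Y).card * (X ∪ Y)ᶜ.card
        + 2 * (X \ Y).card * (Y \ X).card) ∧
    (Crossing X Y →
      (X ∩ Y).card * (X ∩ Y)ᶜ.card + (X ∪ Y).card * (X ∪ Y)ᶜ.card <
        X.card * Xᶜ.card + Y.card * Yᶜ.card) := by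
  set a := (X ∩ Y).card with ha
  set b := (X \ Y).card with hb
  set c := (Y \ X).card with hc
  set d := (X ∪ Y)ᶜ.card with hd
  have h1 : b + a = X.card := Finset.card_sdiff_add_card_inter X Y
  have h2 : c + a = Y.card := by
    rw [hc, ha, Finset.inter_comm]; exact Finset.card_sdiff_add_card_inter Y X
  have h3 : (X ∪ Y).card + a = X.card + Y.card := Finset.card_union_add_card_inter X Y
  have h4 : X.card + Xᶜ.card = Fintype.card V := Finset.card_add_card_compl X
  have h5 : Y.card + Yᶜ.card = Fintype.card V := Finset.card_add_card_compl Y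
  have h6 : a + (X ∩ Y)ᶜ.card = Fintype.card V := Finset.card_add_card_compl _
  have h7 : (X ∪ Y).card + d = Fintype.card V := Finset.card_add_card_compl _
  have hU : (X ∪ Y).card = a + b + c := by omega
  have hX : X.card = a + b := by omega
  have hY : Y.card = a + c := by omega
  have hXc : Xᶜ.card = c + d := by omega
  have hYc : Yᶜ.card = b + d := by omega
  have hIc : (X ∩ Y)ᶜ.card = b + c + d := by omega
  have key : X.card * Xᶜ.card + Y.card * Yᶜ.card =
      a * (X ∩ Y)ᶜ.card + (X ∪ Y).card * d + 2 * b * c := by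
    rw [hU, hX, hY, hXc, hYc, hIc]; ring
  refine ⟨key, fun hcr => ?_⟩
  obtain ⟨n1, n2, n3, n4⟩ := hcr
  have hb1 : 0 < b := Finset.card_pos.mpr n2
  have hc1 : 0 < c := Finset.card_pos.mpr n3
  rw [key]
  have : 0 < 2 * b * c := by positivity
  omega
end

section
/- Let V be a finite set and let X, Y ⊆ V. Then |X|·|V\X| + |Y|·|V\Y| = |X\Y|·|V\(X\Y)| + |Y\X|·|V\(Y\X)| + 2·|X∩Y|·|V\(X∪Y)|. In particular, if X and Y are crossing, then |X\Y|·|V\(X\Y)| + |Y\X|·|V\(Y\X)| < |X|·|V\X| + |Y|·|V\Y|. -/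
/-- `|X|·|V\X| + |Y|·|V\Y| = |X\Y|·|V\(X\Y)| + |Y\X|·|V\(Y\X)| + 2·|X∩Y|·|V\(X∪Y)|`;
in particular, for a crossing pair the difference uncrossing strictly decreases the
potential. -/
theorem card_potential_sdiff {V : Type*} [Fintype V] [DecidableEq V]
    (X Y : Finset V) :
    (X.card * Xᶜ.card + Y.card * Yᶜ.card =
      (X \ Y).card * (X \ Y)ᶜ.card + (Y \ X).card * (Y \ X)ᶜ.card
        + 2 * (X ∩ Y).card * (X ∪ Y)ᶜ.card) ∧
    (Crossing X Y →
      (X \ Y).card * (X \ Y)ᶜ.card + (Y \ X).card * (Y \ X)ᶜ.card <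
        X.card * Xᶜ.card + Y.card * Yᶜ.card) := by
  set a := (X ∩ Y).card with ha
  set b := (X \ Y).card with hb
  set c := (Y \ X).card with hc
  set d := ((X ∪ Y)ᶜ).card with hd
  have h1 : X.card = b + a := by
    rw [hb, ha, Finset.card_sdiff_add_card_inter]
  have h2 : Y.card = c + a := by
    rw [hc, ha, Finset.inter_comm, Finset.card_sdiff_add_card_inter]
  have h3 : Xᶜ.card = c + d := by
    rw [hc, hd, ← Finset.card_union_of_disjoint]
    · congr 1
      ext x
      simp only [Finset.mem_compl, Finset.mem_union, Finset.mem_sdiff]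
      tauto
    · rw [Finset.disjoint_left]
      intro x hx hx'
      simp only [Finset.mem_sdiff, Finset.mem_compl, Finset.mem_union] at hx hx'
      tauto
  have h4 : Yᶜ.card = b + d := by
    rw [hb, hd, ← Finset.card_union_of_disjoint]
    · congr 1
      ext x
      simp only [Finset.mem_compl, Finset.mem_union, Finset.mem_sdiff]
      tauto
    · rw [Finset.disjoint_left]
      intro x hx hx'
      simp only [Finset.mem_sdiff, Finset.mem_compl, Finset.mem_union] at hx hx'
      tauto
  have h5 : (X \ Y)ᶜ.card = a + c + d := by
    rw [ha, hc, hd, ← Finset.card_union_of_disjoint, ← Finset.card_union_of_disjoint]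
    · congr 1
      ext x
      simp only [Finset.mem_compl, Finset.mem_union, Finset.mem_sdiff, Finset.mem_inter]
      tauto
    · rw [Finset.disjoint_left]
      intro x hx hx'
      simp only [Finset.mem_sdiff, Finset.mem_compl, Finset.mem_union,
        Finset.mem_inter] at hx hx'
      tauto
    · rw [Finset.disjoint_left]
      intro x hx hx'
      simp only [Finset.mem_sdiff, Finset.mem_compl, Finset.mem_union,
        Finset.mem_inter] at hx hx'
      tauto
  have h6 : (Y \ X)ᶜ.card = a + b + d := by
    rw [ha, hb, hd, ← Finset.card_union_of_disjoint, ← Finset.card_union_of_disjoint]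
    · congr 1
      ext x
      simp only [Finset.mem_compl, Finset.mem_union, Finset.mem_sdiff, Finset.mem_inter]
      tauto
    · rw [Finset.disjoint_left]
      intro x hx hx'
      simp only [Finset.mem_sdiff, Finset.mem_compl, Finset.mem_union,
        Finset.mem_inter] at hx hx'
      tauto
    · rw [Finset.disjoint_left]
      intro x hx hx'
      simp only [Finset.mem_sdiff, Finset.mem_compl, Finset.mem_union,
        Finset.mem_inter] at hx hx'
      tauto
  have key : X.card * Xᶜ.card + Y.card * Yᶜ.card =
      b * (a + c + d) + c * (a + b + d) + 2 * a * d := by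
    rw [h1, h2, h3, h4]; ring
  constructor
  · rw [key, h5, h6]
  · rintro ⟨hA, hB, hC, hD⟩
    have hapos : 0 < a := Finset.card_pos.mpr hA
    have hdpos : 0 < d := Finset.card_pos.mpr hD
    have : 0 < 2 * a * d := by positivity
    rw [key, h5, h6]
    omega
end

section
/- Let G = (V,E) be a finite undirected graph with edge costs a: E → ℝ≥0, let f be a skew-supermodular function on the subsets of V, and let λ be a function from the subsets of V to ℝ≥0. If λ' is obtained from λ by an uncrossing step at a crossing pair X, Y with λ(X) > 0 and λ(Y) > 0, then Σ_{W ⊆ V} |W|·|V\W|·λ'(W) < Σ_{W ⊆ V} |W|·|V\W|·λ(W). -/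
open scoped Classical

lemma card_lemma {V : Type*} [Fintype V] [DecidableEq V] (X Y : Finset V) :
    X.card = (X ∩ Y).card + (X \ Y).card ∧
    Y.card = (X ∩ Y).card + (Y \ X).card ∧
    Xᶜ.card = (Y \ X).card + ((X ∪ Y)ᶜ).card ∧
    Yᶜ.card = (X \ Y).card + ((X ∪ Y)ᶜ).card ∧
    (X ∩ Y)ᶜ.card = (X \ Y).card + (Y \ X).card + ((X ∪ Y)ᶜ).card ∧
    (X ∪ Y).card = (X ∩ Y).card + (X \ Y).card + (Y \ X).card ∧
    (X \ Y)ᶜ.card = (X ∩ Y).card + (Y \ X).card + ((X ∪ Y)ᶜ).card ∧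
    (Y \ X)ᶜ.card = (X ∩ Y).card + (X \ Y).card + ((X ∪ Y)ᶜ).card := by
  have h1 : X.card = (X ∩ Y).card + (X \ Y).card := by
    rw [Finset.card_inter_add_card_sdiff]
  have h2 : Y.card = (X ∩ Y).card + (Y \ X).card := by
    rw [Finset.inter_comm, Finset.card_inter_add_card_sdiff]
  have h3 : Xᶜ.card = (Y \ X).card + ((X ∪ Y)ᶜ).card := by
    have e1 : Xᶜ ∩ Y = Y \ X := by ext x; simp [and_comm]
    have e2 : Xᶜ \ Y = (X ∪ Y)ᶜ := by ext x; simp [not_or, and_comm]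
    rw [← e1, ← e2, Finset.card_inter_add_card_sdiff]
  have h4 : Yᶜ.card = (X \ Y).card + ((X ∪ Y)ᶜ).card := by
    have e1 : Yᶜ ∩ X = X \ Y := by ext x; simp [and_comm]
    have e2 : Yᶜ \ X = (X ∪ Y)ᶜ := by ext x; simp [not_or]; tauto
    rw [← e1, ← e2, Finset.card_inter_add_card_sdiff]
  have h5 : (X ∩ Y)ᶜ ∩ X = X \ Y := by ext x; simp; tauto
  have h5' : (X ∩ Y)ᶜ \ X = Xᶜ := by ext x; simp; tauto
  have h6 : X ∪ Y = X ∪ (Y \ X) := by ext x; simp [or_comm]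
  have h6' : Disjoint X (Y \ X) := Finset.disjoint_sdiff
  have h7 : (X \ Y)ᶜ ∩ X = X ∩ Y := by ext x; simp; tauto
  have h7' : (X \ Y)ᶜ \ X = Xᶜ := by ext x; simp; tauto
  have h8 : (Y \ X)ᶜ ∩ Y = X ∩ Y := by ext x; simp; tauto
  have h8' : (Y \ X)ᶜ \ Y = Yᶜ := by ext x; simp; tauto
  refine ⟨h1, h2, h3, h4, ?_, ?_, ?_, ?_⟩
  · rw [← Finset.card_inter_add_card_sdiff ((X ∩ Y)ᶜ) X, h5, h5', h3]; ring
  · rw [h6, Finset.card_union_of_disjoint h6', h1]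
  · rw [← Finset.card_inter_add_card_sdiff ((X \ Y)ᶜ) X, h7, h7', h3]; ring
  · rw [← Finset.card_inter_add_card_sdiff ((Y \ X)ᶜ) Y, h8, h8', h4]; ring

/-- An uncrossing step at a crossing pair `X, Y` with `lam X, lam Y > 0` strictly
decreases the potential `Σ_W |W|·|V\W|·lam W`. -/
theorem uncrossing_step_potential_decrease {V : Type*} [Fintype V] [DecidableEq V]
    (f : Finset V → ℝ) (hf0 : ∀ X, 0 ≤ f X)
    (hf : ∀ X Y : Finset V,
      f X + f Y ≤ max (f (X ∩ Y) + f (X ∪ Y)) (f (X \ Y) + f (Y \ X)))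
    (lam : Finset V → ℝ) (hlam0 : ∀ W, 0 ≤ lam W)
    (X Y : Finset V) (hXY : Crossing X Y) (hX : 0 < lam X) (hY : 0 < lam Y)
    (X' Y' : Finset V)
    (hX'Y' : (X' = X ∩ Y ∧ Y' = X ∪ Y) ∨ (X' = X \ Y ∧ Y' = Y \ X))
    (hfXY : f X + f Y ≤ f X' + f Y')
    (lam' : Finset V → ℝ)
    (hlam' : ∀ W : Finset V,
      lam' W = lam W
        - (if W = X then min (lam X) (lam Y) else 0)
        - (if W = Y then min (lam X) (lam Y) else 0)
        + (if W = X' then min (lam X) (lam Y) else 0)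
        + (if W = Y' then min (lam X) (lam Y) else 0)) :
    (∑ W : Finset V, (W.card * Wᶜ.card : ℝ) * lam' W) <
      (∑ W : Finset V, (W.card * Wᶜ.card : ℝ) * lam W) := by
  set α := min (lam X) (lam Y) with hα
  have hαpos : 0 < α := lt_min hX hY
  have key : ∀ W : Finset V, (W.card * Wᶜ.card : ℝ) * lam' W
      = (W.card * Wᶜ.card : ℝ) * lam W
        - (if W = X then (W.card * Wᶜ.card : ℝ) * α else 0)
        - (if W = Y then (W.card * Wᶜ.card : ℝ) * α else 0)
        + (if W = X' then (W.card * Wᶜ.card : ℝ) * α else 0)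
        + (if W = Y' then (W.card * Wᶜ.card : ℝ) * α else 0) := by
    intro W; rw [hlam' W]; split_ifs <;> ring
  have hsum : (∑ W : Finset V, (W.card * Wᶜ.card : ℝ) * lam' W)
      = (∑ W : Finset V, (W.card * Wᶜ.card : ℝ) * lam W)
        - (X.card * Xᶜ.card : ℝ) * α - (Y.card * Yᶜ.card : ℝ) * α
        + (X'.card * X'ᶜ.card : ℝ) * α + (Y'.card * Y'ᶜ.card : ℝ) * α := by
    rw [Finset.sum_congr rfl (fun W _ => key W)]
    simp [Finset.sum_sub_distrib, Finset.sum_add_distrib, Finset.sum_ite_eq']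
  rw [hsum]
  have hcard : X'.card * X'ᶜ.card + Y'.card * Y'ᶜ.card
      < X.card * Xᶜ.card + Y.card * Yᶜ.card := by
    obtain ⟨hne1, hne2, hne3, hne4⟩ := hXY
    obtain ⟨e1, e2, e3, e4, e5, e6, e7, e8⟩ := card_lemma X Y
    have ha : 0 < (X ∩ Y).card := Finset.card_pos.2 hne1
    have hb : 0 < (X \ Y).card := Finset.card_pos.2 hne2
    have hc : 0 < (Y \ X).card := Finset.card_pos.2 hne3
    have hd : 0 < ((X ∪ Y)ᶜ).card := Finset.card_pos.2 hne4
    rcases hX'Y' with ⟨rfl, rfl⟩ | ⟨rfl, rfl⟩ <;>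
      · rw [e1, e2, e3, e4] at *
        nlinarith [ha, hb, hc, hd]
  have : ((X'.card * X'ᶜ.card : ℝ) + (Y'.card * Y'ᶜ.card : ℝ))
      < ((X.card * Xᶜ.card : ℝ) + (Y.card * Yᶜ.card : ℝ)) := by
    exact_mod_cast hcard
  nlinarith [this, hαpos]
end

section
/- Let V be a finite set, let f be a skew-supermodular function on the subsets of V, and let λ⁰, λ¹, …, λᵀ be a sequence of integer-valued functions from the subsets of V to ℝ≥0 such that for each t < T, λ^{t+1} is obtained from λᵗ by an uncrossing step at some crossing pair X, Y with λᵗ(X) > 0 and λᵗ(Y) > 0. Then T ≤ Σ_{W ⊆ V} |W|·|V\W|·λ⁰(W). In particular, from an integer-valued λ, any sequence of uncrossing steps terminates after finitely many steps. -/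
open scoped Classical

/-- `lam'` is obtained from `lam` by an uncrossing step (for the skew-supermodular
function `f`) at a crossing pair `X, Y` with `lam X, lam Y > 0`. -/
def UncrossStep {V : Type*} [Fintype V] [DecidableEq V]
    (f : Finset V → ℝ) (lam lam' : Finset V → ℝ) : Prop :=
  ∃ X Y X' Y' : Finset V,
    Crossing X Y ∧ 0 < lam X ∧ 0 < lam Y ∧
    ((X' = X ∩ Y ∧ Y' = X ∪ Y) ∨ (X' = X \ Y ∧ Y' = Y \ X)) ∧
    f X + f Y ≤ f X' + f Y' ∧
    ∀ W : Finset V,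
      lam' W = lam W
        - (if W = X then min (lam X) (lam Y) else 0)
        - (if W = Y then min (lam X) (lam Y) else 0)
        + (if W = X' then min (lam X) (lam Y) else 0)
        + (if W = Y' then min (lam X) (lam Y) else 0)

/-- The potential `g W = |W|·|Wᶜ|` strictly drops (by at least 2 in total) when a
crossing pair is uncrossed, in either of the two possible ways. -/
lemma poly_uncross_inter (a b c d : ℝ) (ha : 1 ≤ a) (hc : 1 ≤ c) (hb : 0 ≤ b) (hd : 0 ≤ d) :
    b * (a + c + d) + (a + b + c) * d + 2 ≤ (a + b) * (c + d) + (b + c) * (a + d) := by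
  nlinarith [mul_le_mul ha hc (by norm_num : (0:ℝ) ≤ 1) (le_trans (by norm_num) ha)]

lemma poly_uncross_diff (a b c d : ℝ) (hb : 1 ≤ b) (hd : 1 ≤ d) (ha : 0 ≤ a) (hc : 0 ≤ c) :
    a * (b + c + d) + c * (a + b + d) + 2 ≤ (a + b) * (c + d) + (b + c) * (a + d) := by
  nlinarith [mul_le_mul hb hd (by norm_num : (0:ℝ) ≤ 1) (le_trans (by norm_num) hb)]

lemma crossing_potential_drop {V : Type*} [Fintype V] [DecidableEq V]
    {X Y X' Y' : Finset V} (hc : Crossing X Y)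
    (h : (X' = X ∩ Y ∧ Y' = X ∪ Y) ∨ (X' = X \ Y ∧ Y' = Y \ X)) :
    (X'.card * X'ᶜ.card : ℝ) + (Y'.card * Y'ᶜ.card : ℝ) + 2
      ≤ (X.card * Xᶜ.card : ℝ) + (Y.card * Yᶜ.card : ℝ) := by
  obtain ⟨h1, h2, h3, h4⟩ := hc
  set a : ℝ := ((X \ Y).card : ℝ) with hadef
  set b : ℝ := ((X ∩ Y).card : ℝ) with hbdef
  set c : ℝ := ((Y \ X).card : ℝ) with hcdef
  set d : ℝ := (((X ∪ Y)ᶜ).card : ℝ) with hddef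
  have ha : (1 : ℝ) ≤ a := by rw [hadef]; exact_mod_cast Finset.card_pos.mpr h2
  have hb : (1 : ℝ) ≤ b := by rw [hbdef]; exact_mod_cast Finset.card_pos.mpr h1
  have hcY : (1 : ℝ) ≤ c := by rw [hcdef]; exact_mod_cast Finset.card_pos.mpr h3
  have hd : (1 : ℝ) ≤ d := by rw [hddef]; exact_mod_cast Finset.card_pos.mpr h4
  have E1 : (X.card : ℝ) + (Xᶜ.card : ℝ) = (Fintype.card V : ℝ) := by
    exact_mod_cast Finset.card_add_card_compl X
  have E2 : (Y.card : ℝ) + (Yᶜ.card : ℝ) = (Fintype.card V : ℝ) := by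
    exact_mod_cast Finset.card_add_card_compl Y
  have E3 : b + (((X ∩ Y)ᶜ).card : ℝ) = (Fintype.card V : ℝ) := by
    rw [hbdef]; exact_mod_cast Finset.card_add_card_compl (X ∩ Y)
  have E4 : ((X ∪ Y).card : ℝ) + d = (Fintype.card V : ℝ) := by
    rw [hddef]; exact_mod_cast Finset.card_add_card_compl (X ∪ Y)
  have E3' : a + (((X \ Y)ᶜ).card : ℝ) = (Fintype.card V : ℝ) := by
    rw [hadef]; exact_mod_cast Finset.card_add_card_compl (X \ Y)
  have E4' : c + (((Y \ X)ᶜ).card : ℝ) = (Fintype.card V : ℝ) := by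
    rw [hcdef]; exact_mod_cast Finset.card_add_card_compl (Y \ X)
  have E5 : a + b = (X.card : ℝ) := by
    rw [hadef, hbdef]; exact_mod_cast Finset.card_sdiff_add_card_inter X Y
  have E6 : c + b = (Y.card : ℝ) := by
    have := Finset.card_sdiff_add_card_inter Y X
    rw [Finset.inter_comm] at this
    rw [hcdef, hbdef]; exact_mod_cast this
  have E7 : ((X ∪ Y).card : ℝ) + b = (X.card : ℝ) + (Y.card : ℝ) := by
    rw [hbdef]; exact_mod_cast Finset.card_union_add_card_inter X Y
  have hx : (X.card : ℝ) = a + b := E5.symm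
  have hy : (Y.card : ℝ) = b + c := by linarith
  have hu : ((X ∪ Y).card : ℝ) = a + b + c := by linarith
  have hN : (Fintype.card V : ℝ) = a + b + c + d := by linarith
  have hxc : (Xᶜ.card : ℝ) = c + d := by linarith
  have hyc : (Yᶜ.card : ℝ) = a + d := by linarith
  have hic : (((X ∩ Y)ᶜ).card : ℝ) = a + c + d := by linarith
  have hac : (((X \ Y)ᶜ).card : ℝ) = b + c + d := by linarith
  have hcc : (((Y \ X)ᶜ).card : ℝ) = a + b + d := by linarith
  clear_value a b c d
  rcases h with ⟨hX', hY'⟩ | ⟨hX', hY'⟩ <;> subst hX' <;> subst hY' <;>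
    rw [hx, hxc, hy, hyc]
  · rw [hu, ← hbdef, hic, ← hddef]
    linarith [poly_uncross_inter a b c d ha hcY (le_trans zero_le_one hb)
      (le_trans zero_le_one hd)]
  · rw [← hadef, hac, ← hcdef, hcc]
    linarith [poly_uncross_diff a b c d hb hd (le_trans zero_le_one ha)
      (le_trans zero_le_one hcY)]

/-- One uncrossing step on an integer-valued nonnegative `lam` drops the potential
`Σ_W |W||Wᶜ| lam W` by at least 1 (in fact at least 2). -/
lemma uncross_step_potential {V : Type*} [Fintype V] [DecidableEq V]
    {f lam lam' : Finset V → ℝ}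
    (hnn : ∀ W, 0 ≤ lam W) (hint : ∀ W, ∃ m : ℤ, lam W = (m : ℝ))
    (h : UncrossStep f lam lam') :
    (∑ W : Finset V, (W.card * Wᶜ.card : ℝ) * lam' W) + 1
      ≤ ∑ W : Finset V, (W.card * Wᶜ.card : ℝ) * lam W := by
  obtain ⟨X, Y, X', Y', hc, hX, hY, hch, -, hform⟩ := h
  set g : Finset V → ℝ := fun W => (W.card * Wᶜ.card : ℝ) with hg
  set α : ℝ := min (lam X) (lam Y) with hα
  have hα1 : 1 ≤ α := by
    have h1 : 1 ≤ lam X := by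
      obtain ⟨m, hm⟩ := hint X
      rw [hm] at hX ⊢
      exact_mod_cast hX
    have h2 : 1 ≤ lam Y := by
      obtain ⟨m, hm⟩ := hint Y
      rw [hm] at hY ⊢
      exact_mod_cast hY
    exact le_min h1 h2
  have hsum : (∑ W : Finset V, g W * lam' W)
      = (∑ W : Finset V, g W * lam W) - α * g X - α * g Y + α * g X' + α * g Y' := by
    have : ∀ W : Finset V, g W * lam' W =
        g W * lam W - (if W = X then α * g W else 0) - (if W = Y then α * g W else 0)
          + (if W = X' then α * g W else 0) + (if W = Y' then α * g W else 0) := by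
      intro W
      rw [hform W]
      simp only [mul_sub, mul_add, mul_ite, mul_zero, mul_comm]
    rw [Finset.sum_congr rfl (fun W _ => this W)]
    simp only [Finset.sum_add_distrib, Finset.sum_sub_distrib, Finset.sum_ite_eq',
      Finset.mem_univ, if_true]
    try ring
  have hkey : g X' + g Y' + 2 ≤ g X + g Y := crossing_potential_drop hc hch
  have hα0 : (0:ℝ) ≤ α := le_trans (by norm_num) hα1
  rw [hsum]
  nlinarith [mul_le_mul_of_nonneg_left hkey hα0]

/-- If `lam 0, lam 1, …, lam T` is a sequence of integer-valued nonnegative functions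
in which each `lam (t+1)` arises from `lam t` by an uncrossing step, then
`T ≤ Σ_W |W|·|V\W|·lam 0 W`. -/
theorem uncrossing_sequence_length_bound {V : Type*} [Fintype V] [DecidableEq V]
    (f : Finset V → ℝ) (hf0 : ∀ X, 0 ≤ f X)
    (hf : ∀ X Y : Finset V,
      f X + f Y ≤ max (f (X ∩ Y) + f (X ∪ Y)) (f (X \ Y) + f (Y \ X)))
    (T : ℕ) (lam : ℕ → Finset V → ℝ)
    (hnn : ∀ t, t ≤ T → ∀ W, 0 ≤ lam t W)
    (hint : ∀ t, t ≤ T → ∀ W, ∃ m : ℤ, lam t W = (m : ℝ))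
    (hstep : ∀ t, t < T → UncrossStep f (lam t) (lam (t + 1))) :
    (T : ℝ) ≤ ∑ W : Finset V, (W.card * Wᶜ.card : ℝ) * lam 0 W := by
  have main : ∀ t, t ≤ T →
      (t : ℝ) + ∑ W : Finset V, (W.card * Wᶜ.card : ℝ) * lam t W
        ≤ ∑ W : Finset V, (W.card * Wᶜ.card : ℝ) * lam 0 W := by
    intro t
    induction t with
    | zero => intro _; simp
    | succ t ih =>
      intro ht
      have ht' : t ≤ T := Nat.le_of_succ_le ht
      have hlt : t < T := ht
      have hdrop := uncross_step_potential (hnn t ht') (hint t ht') (hstep t hlt)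
      have := ih ht'
      push_cast
      linarith
  have hT := main T le_rfl
  have hpos : 0 ≤ ∑ W : Finset V, (W.card * Wᶜ.card : ℝ) * lam T W :=
    Finset.sum_nonneg fun W _ => mul_nonneg (by positivity) (hnn T le_rfl W)
  linarith
end

section
/- Let G = (V,E) be a finite undirected graph with edge costs a: E → ℝ≥0 and let f be a skew-supermodular function on the subsets of V. For every dual feasible λ taking only rational values, there exists a laminar dual feasible λ* whose objective value is at least the objective value of λ. -/
open scoped Classical

lemma shift_sum {V : Type*} [Fintype V] [DecidableEq V] {R : Type*} [CommRing R]
    (μ μ' : Finset V → ℕ) (X Y A B : Finset V) (m : ℕ)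
    (hmX : m ≤ μ X) (hmY : m ≤ μ Y)
    (hXY : X ≠ Y) (hAX : A ≠ X) (hAY : A ≠ Y) (hBX : B ≠ X) (hBY : B ≠ Y) (hAB : A ≠ B)
    (hX : μ' X = μ X - m) (hY : μ' Y = μ Y - m)
    (hA : μ' A = μ A + m) (hB : μ' B = μ B + m)
    (ho : ∀ W, W ≠ X → W ≠ Y → W ≠ A → W ≠ B → μ' W = μ W)
    (g : Finset V → R) :
    ∑ W : Finset V, (μ' W : R) * g W
      = (∑ W : Finset V, (μ W : R) * g W) + m * (g A + g B - g X - g Y) := by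
  have key : ∀ W, (μ' W : R) * g W
      = (μ W : R) * g W
        + ((if W = A then (m : R) * g W else 0) + (if W = B then (m : R) * g W else 0)
          - (if W = X then (m : R) * g W else 0) - (if W = Y then (m : R) * g W else 0)) := by
    intro W
    by_cases h1 : W = X
    · subst h1; rw [hX, Nat.cast_sub hmX]; simp [hXY, Ne.symm hAX, Ne.symm hBX]; ring
    · by_cases h2 : W = Y
      · subst h2; rw [hY, Nat.cast_sub hmY]; simp [h1, Ne.symm hAY, Ne.symm hBY]; ring
      · by_cases h3 : W = A
        · subst h3; rw [hA, Nat.cast_add]; simp [h1, h2, hAB]; ring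
        · by_cases h4 : W = B
          · subst h4; rw [hB, Nat.cast_add]; simp [h1, h2, Ne.symm hAB]; ring
          · rw [ho W h1 h2 h3 h4]; simp [h1, h2, h3, h4]
  rw [Finset.sum_congr rfl (fun W _ => key W), Finset.sum_add_distrib]
  congr 1
  rw [Finset.sum_sub_distrib, Finset.sum_sub_distrib, Finset.sum_add_distrib]
  simp [Finset.sum_ite_eq' Finset.univ]
  ring

lemma chi_inter_union {V : Type*} [DecidableEq V] (p q : V) (X Y : Finset V) :
    (if ¬ (p ∈ X ∩ Y ↔ q ∈ X ∩ Y) then (1:ℝ) else 0)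
      + (if ¬ (p ∈ X ∪ Y ↔ q ∈ X ∪ Y) then (1:ℝ) else 0)
    ≤ (if ¬ (p ∈ X ↔ q ∈ X) then (1:ℝ) else 0) + (if ¬ (p ∈ Y ↔ q ∈ Y) then (1:ℝ) else 0) := by
  by_cases h1 : p ∈ X <;> by_cases h2 : q ∈ X <;> by_cases h3 : p ∈ Y <;> by_cases h4 : q ∈ Y <;>
    simp [h1, h2, h3, h4, Finset.mem_inter, Finset.mem_union]

lemma chi_sdiff {V : Type*} [DecidableEq V] (p q : V) (X Y : Finset V) :
    (if ¬ (p ∈ X \ Y ↔ q ∈ X \ Y) then (1:ℝ) else 0)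
      + (if ¬ (p ∈ Y \ X ↔ q ∈ Y \ X) then (1:ℝ) else 0)
    ≤ (if ¬ (p ∈ X ↔ q ∈ X) then (1:ℝ) else 0) + (if ¬ (p ∈ Y ↔ q ∈ Y) then (1:ℝ) else 0) := by
  by_cases h1 : p ∈ X <;> by_cases h2 : q ∈ X <;> by_cases h3 : p ∈ Y <;> by_cases h4 : q ∈ Y <;>
    simp [h1, h2, h3, h4, Finset.mem_sdiff]

lemma step {V E : Type*} [Fintype V] [DecidableEq V] [Fintype E]
    (u v : E → V) (b : E → ℝ) (f : Finset V → ℝ)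
    (μ : Finset V → ℕ) (X Y A B : Finset V)
    (hX0 : μ X ≠ 0) (hY0 : μ Y ≠ 0)
    (hXY : X ≠ Y) (hAX : A ≠ X) (hAY : A ≠ Y) (hBX : B ≠ X) (hBY : B ≠ Y) (hAB : A ≠ B)
    (hcard : (A.card : ℤ) * ((Fintype.card V : ℤ) - A.card)
        + (B.card : ℤ) * ((Fintype.card V : ℤ) - B.card) + 2
      ≤ (X.card : ℤ) * ((Fintype.card V : ℤ) - X.card)
        + (Y.card : ℤ) * ((Fintype.card V : ℤ) - Y.card))
    (hchi : ∀ e : E,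
      (if ¬ (u e ∈ A ↔ v e ∈ A) then (1:ℝ) else 0) + (if ¬ (u e ∈ B ↔ v e ∈ B) then (1:ℝ) else 0)
      ≤ (if ¬ (u e ∈ X ↔ v e ∈ X) then (1:ℝ) else 0) + (if ¬ (u e ∈ Y ↔ v e ∈ Y) then (1:ℝ) else 0))
    (hfXY : f X + f Y ≤ f A + f B)
    (hfeas : ∀ e : E,
      (∑ W : Finset V, (μ W : ℝ) * (if ¬ (u e ∈ W ↔ v e ∈ W) then 1 else 0)) ≤ b e) :
    ∃ μ' : Finset V → ℕ,
      (∀ e : E, (∑ W : Finset V, (μ' W : ℝ) * (if ¬ (u e ∈ W ↔ v e ∈ W) then 1 else 0)) ≤ b e) ∧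
      (∑ W : Finset V, μ' W * (W.card * (Fintype.card V - W.card)))
        < (∑ W : Finset V, μ W * (W.card * (Fintype.card V - W.card))) ∧
      (∑ W : Finset V, (μ W : ℝ) * f W) ≤ ∑ W : Finset V, (μ' W : ℝ) * f W := by
  set m : ℕ := min (μ X) (μ Y) with hm
  have hmX : m ≤ μ X := min_le_left _ _
  have hmY : m ≤ μ Y := min_le_right _ _
  have hm1 : 1 ≤ m := by
    have := Nat.pos_of_ne_zero hX0
    have := Nat.pos_of_ne_zero hY0
    omega
  set μ' : Finset V → ℕ := fun W =>
    if W = X then μ X - m else if W = Y then μ Y - m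
    else if W = A then μ A + m else if W = B then μ B + m else μ W with hμ'
  have eX : μ' X = μ X - m := by simp [hμ']
  have eY : μ' Y = μ Y - m := by simp [hμ', Ne.symm hXY]
  have eA : μ' A = μ A + m := by simp [hμ', hAX, hAY]
  have eB : μ' B = μ B + m := by simp [hμ', hBX, hBY, Ne.symm hAB]
  have eo : ∀ W, W ≠ X → W ≠ Y → W ≠ A → W ≠ B → μ' W = μ W := by
    intro W h1 h2 h3 h4; simp [hμ', h1, h2, h3, h4]
  have hshiftR : ∀ g : Finset V → ℝ,
      ∑ W : Finset V, (μ' W : ℝ) * g W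
        = (∑ W : Finset V, (μ W : ℝ) * g W) + m * (g A + g B - g X - g Y) :=
    fun g => shift_sum μ μ' X Y A B m hmX hmY hXY hAX hAY hBX hBY hAB eX eY eA eB eo g
  refine ⟨μ', ?_, ?_, ?_⟩
  · intro e
    rw [hshiftR (fun W => if ¬ (u e ∈ W ↔ v e ∈ W) then 1 else 0)]
    have h1 := hchi e
    have h2 : (m : ℝ) * ((if ¬ (u e ∈ A ↔ v e ∈ A) then (1:ℝ) else 0)
        + (if ¬ (u e ∈ B ↔ v e ∈ B) then (1:ℝ) else 0)
        - (if ¬ (u e ∈ X ↔ v e ∈ X) then (1:ℝ) else 0)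
        - (if ¬ (u e ∈ Y ↔ v e ∈ Y) then (1:ℝ) else 0)) ≤ 0 :=
      mul_nonpos_of_nonneg_of_nonpos (by positivity) (by linarith)
    have h3 := hfeas e
    linarith
  · have hcast : ∀ ν : Finset V → ℕ,
        ((∑ W : Finset V, ν W * (W.card * (Fintype.card V - W.card)) : ℕ) : ℤ)
          = ∑ W : Finset V, (ν W : ℤ) * ((W.card : ℤ) * ((Fintype.card V : ℤ) - W.card)) := by
      intro ν
      rw [Nat.cast_sum]
      refine Finset.sum_congr rfl fun W _ => ?_
      rw [Nat.cast_mul, Nat.cast_mul, Nat.cast_sub (Finset.card_le_univ W)]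
    have hshiftZ := shift_sum (R := ℤ) μ μ' X Y A B m hmX hmY hXY hAX hAY hBX hBY hAB eX eY eA eB eo
      (fun W => (W.card : ℤ) * ((Fintype.card V : ℤ) - W.card))
    have key : ((∑ W : Finset V, μ' W * (W.card * (Fintype.card V - W.card)) : ℕ) : ℤ)
        < ((∑ W : Finset V, μ W * (W.card * (Fintype.card V - W.card)) : ℕ) : ℤ) := by
      rw [hcast, hcast, hshiftZ]
      have hm1' : (1 : ℤ) ≤ (m : ℤ) := by exact_mod_cast hm1
      nlinarith [hcard, hm1']
    exact_mod_cast key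
  · rw [hshiftR f]
    have : (0 : ℝ) ≤ (m : ℝ) * (f A + f B - f X - f Y) :=
      mul_nonneg (by positivity) (by linarith)
    linarith

lemma uncross_main {V E : Type*} [Fintype V] [DecidableEq V] [Fintype E]
    (u v : E → V) (b : E → ℝ) (f : Finset V → ℝ)
    (hf : ∀ X Y : Finset V,
      f X + f Y ≤ max (f (X ∩ Y) + f (X ∪ Y)) (f (X \ Y) + f (Y \ X))) :
    ∀ k (μ : Finset V → ℕ),
      (∑ W : Finset V, μ W * (W.card * (Fintype.card V - W.card))) ≤ k →
      (∀ e : E, (∑ W : Finset V, (μ W : ℝ) * (if ¬ (u e ∈ W ↔ v e ∈ W) then 1 else 0)) ≤ b e) →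
      ∃ μ' : Finset V → ℕ,
        (∀ e : E, (∑ W : Finset V, (μ' W : ℝ) * (if ¬ (u e ∈ W ↔ v e ∈ W) then 1 else 0)) ≤ b e) ∧
        (∀ X Y : Finset V, μ' X ≠ 0 → μ' Y ≠ 0 → ¬ Crossing X Y) ∧
        (∑ W : Finset V, (μ W : ℝ) * f W) ≤ ∑ W : Finset V, (μ' W : ℝ) * f W := by
  intro k
  induction k using Nat.strong_induction_on with
  | _ k ih =>
    intro μ hk hfeas
    by_cases hlam : ∀ X Y : Finset V, μ X ≠ 0 → μ Y ≠ 0 → ¬ Crossing X Y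
    · exact ⟨μ, hfeas, hlam, le_refl _⟩
    · push_neg at hlam
      obtain ⟨X, Y, hX0, hY0, hcross⟩ := hlam
      obtain ⟨hp, hd1, hd2, hc⟩ := hcross
      have h1 : (X ∩ Y).card + (X ∪ Y).card = X.card + Y.card :=
        Finset.card_inter_add_card_union X Y
      have h2 : (X \ Y).card + (X ∩ Y).card = X.card := Finset.card_sdiff_add_card_inter X Y
      have h3 : (Y \ X).card + (X ∩ Y).card = Y.card := by
        rw [Finset.inter_comm]; exact Finset.card_sdiff_add_card_inter Y X
      have hp1 : 1 ≤ (X ∩ Y).card := hp.card_pos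
      have hd11 : 1 ≤ (X \ Y).card := hd1.card_pos
      have hd21 : 1 ≤ (Y \ X).card := hd2.card_pos
      have h5 : (X ∪ Y).card < Fintype.card V := by
        have := hc.card_pos
        rw [Finset.card_compl] at this
        have h6 := Finset.card_le_univ (X ∪ Y)
        omega
      have hXY : X ≠ Y := by
        intro h; obtain ⟨w, hw⟩ := hd1; rw [h, Finset.sdiff_self] at hw
        exact absurd hw (Finset.notMem_empty w)
      -- integer abbreviations
      set n : ℤ := (Fintype.card V : ℤ) with hn
      have z1 : ((X ∩ Y).card : ℤ) + ((X ∪ Y).card : ℤ) = (X.card : ℤ) + (Y.card : ℤ) := by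
        exact_mod_cast h1
      have z2 : ((X \ Y).card : ℤ) + ((X ∩ Y).card : ℤ) = (X.card : ℤ) := by exact_mod_cast h2
      have z3 : ((Y \ X).card : ℤ) + ((X ∩ Y).card : ℤ) = (Y.card : ℤ) := by exact_mod_cast h3
      have zp : (1 : ℤ) ≤ ((X ∩ Y).card : ℤ) := by exact_mod_cast hp1
      have za : (1 : ℤ) ≤ ((X \ Y).card : ℤ) := by exact_mod_cast hd11
      have zc : (1 : ℤ) ≤ ((Y \ X).card : ℤ) := by exact_mod_cast hd21
      have zs : ((X ∪ Y).card : ℤ) + 1 ≤ n := by rw [hn]; exact_mod_cast h5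
      by_cases hb : f X + f Y ≤ f (X ∩ Y) + f (X ∪ Y)
      · -- uncross to intersection and union
        have nAX : X ∩ Y ≠ X := by intro h; have := congrArg Finset.card h; omega
        have nAY : X ∩ Y ≠ Y := by intro h; have := congrArg Finset.card h; omega
        have nBX : X ∪ Y ≠ X := by intro h; have := congrArg Finset.card h; omega
        have nBY : X ∪ Y ≠ Y := by intro h; have := congrArg Finset.card h; omega
        have nAB : X ∩ Y ≠ X ∪ Y := by intro h; have := congrArg Finset.card h; omega
        have hcard : ((X ∩ Y).card : ℤ) * (n - (X ∩ Y).card)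
            + ((X ∪ Y).card : ℤ) * (n - (X ∪ Y).card) + 2
            ≤ (X.card : ℤ) * (n - X.card) + (Y.card : ℤ) * (n - Y.card) := by
          have hxp : (1 : ℤ) ≤ (X.card : ℤ) - (X ∩ Y).card := by linarith
          have hyp : (1 : ℤ) ≤ (Y.card : ℤ) - (X ∩ Y).card := by linarith
          have hprod : (1 : ℤ) ≤ ((X.card : ℤ) - (X ∩ Y).card) * ((Y.card : ℤ) - (X ∩ Y).card) := by
            simpa using mul_le_mul hxp hyp (by norm_num) (by linarith)
          have hs' : ((X ∪ Y).card : ℤ) = (X.card : ℤ) + (Y.card : ℤ) - (X ∩ Y).card := by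
            linarith
          have hid : (X.card : ℤ) * (n - X.card) + (Y.card : ℤ) * (n - Y.card)
              - (((X ∩ Y).card : ℤ) * (n - (X ∩ Y).card) + ((X ∪ Y).card : ℤ) * (n - (X ∪ Y).card))
              = 2 * (((X.card : ℤ) - (X ∩ Y).card) * ((Y.card : ℤ) - (X ∩ Y).card)) := by
            rw [hs']; ring
          linarith [hid, hprod]
        obtain ⟨μ'', hfeas'', hlt'', hobj''⟩ :=
          step u v b f μ X Y (X ∩ Y) (X ∪ Y) hX0 hY0 hXY nAX nAY nBX nBY nAB hcard
            (fun e => chi_inter_union (u e) (v e) X Y) hb hfeas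
        obtain ⟨μ', hfeas', hlam', hobj'⟩ :=
          ih (∑ W : Finset V, μ'' W * (W.card * (Fintype.card V - W.card)))
            (by omega) μ'' le_rfl hfeas''
        exact ⟨μ', hfeas', hlam', le_trans hobj'' hobj'⟩
      · -- uncross to the two differences
        have hb2 : f X + f Y ≤ f (X \ Y) + f (Y \ X) := by
          rcases le_max_iff.mp (hf X Y) with h | h
          · exact absurd h hb
          · exact h
        have mAX : X \ Y ≠ X := by intro h; have := congrArg Finset.card h; omega
        have mBY : Y \ X ≠ Y := by intro h; have := congrArg Finset.card h; omega
        have mAY : X \ Y ≠ Y := by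
          intro h; obtain ⟨w, hw⟩ := hp; rw [Finset.mem_inter] at hw
          have : w ∈ X \ Y := by rw [h]; exact hw.2
          rw [Finset.mem_sdiff] at this; exact this.2 hw.2
        have mBX : Y \ X ≠ X := by
          intro h; obtain ⟨w, hw⟩ := hp; rw [Finset.mem_inter] at hw
          have : w ∈ Y \ X := by rw [h]; exact hw.1
          rw [Finset.mem_sdiff] at this; exact this.2 hw.1
        have mAB : X \ Y ≠ Y \ X := by
          intro h; obtain ⟨w, hw⟩ := hd1
          have hw2 : w ∈ Y \ X := by rw [← h]; exact hw
          rw [Finset.mem_sdiff] at hw hw2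
          exact hw2.2 hw.1
        have hcard : ((X \ Y).card : ℤ) * (n - (X \ Y).card)
            + ((Y \ X).card : ℤ) * (n - (Y \ X).card) + 2
            ≤ (X.card : ℤ) * (n - X.card) + (Y.card : ℤ) * (n - Y.card) := by
          have hns : (1 : ℤ) ≤ n - (X ∪ Y).card := by linarith
          have hprod : (1 : ℤ) ≤ ((X ∩ Y).card : ℤ) * (n - (X ∪ Y).card) := by
            simpa using mul_le_mul zp hns (by norm_num) (by linarith)
          have hx : (X.card : ℤ) = ((X \ Y).card : ℤ) + ((X ∩ Y).card : ℤ) := by linarith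
          have hy : (Y.card : ℤ) = ((Y \ X).card : ℤ) + ((X ∩ Y).card : ℤ) := by linarith
          have hs' : ((X ∪ Y).card : ℤ)
              = ((X \ Y).card : ℤ) + ((Y \ X).card : ℤ) + ((X ∩ Y).card : ℤ) := by linarith
          have hid : (X.card : ℤ) * (n - X.card) + (Y.card : ℤ) * (n - Y.card)
              - (((X \ Y).card : ℤ) * (n - (X \ Y).card)
                + ((Y \ X).card : ℤ) * (n - (Y \ X).card))
              = 2 * (((X ∩ Y).card : ℤ) * (n - (X ∪ Y).card)) := by
            rw [hx, hy, hs']; ring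
          linarith [hid, hprod]
        obtain ⟨μ'', hfeas'', hlt'', hobj''⟩ :=
          step u v b f μ X Y (X \ Y) (Y \ X) hX0 hY0 hXY mAX mAY mBX mBY mAB hcard
            (fun e => chi_sdiff (u e) (v e) X Y) hb2 hfeas
        obtain ⟨μ', hfeas', hlam', hobj'⟩ :=
          ih (∑ W : Finset V, μ'' W * (W.card * (Fintype.card V - W.card)))
            (by omega) μ'' le_rfl hfeas''
        exact ⟨μ', hfeas', hlam', le_trans hobj'' hobj'⟩

/-- For every rational-valued dual feasible `lam` there is a laminar dual feasible
`lam*` whose objective value is at least that of `lam`.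

The graph `G = (V,E)` is modelled by a finite edge type `E` with endpoint maps
`u v : E → V`; an edge `e` is in `δX` iff exactly one of its endpoints lies in `X`. -/
theorem exists_laminar_dual {V E : Type*} [Fintype V] [DecidableEq V] [Fintype E]
    (u v : E → V) (a : E → ℝ) (ha : ∀ e, 0 ≤ a e)
    (f : Finset V → ℝ) (hf0 : ∀ X, 0 ≤ f X)
    (hf : ∀ X Y : Finset V,
      f X + f Y ≤ max (f (X ∩ Y) + f (X ∪ Y)) (f (X \ Y) + f (Y \ X)))
    (lam : Finset V → ℝ) (hlam0 : ∀ W, 0 ≤ lam W)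
    (hrat : ∀ W, ∃ q : ℚ, lam W = (q : ℝ))
    (hfeas : ∀ e : E,
      (∑ W : Finset V, if ¬ (u e ∈ W ↔ v e ∈ W) then lam W else 0) ≤ a e) :
    ∃ lam' : Finset V → ℝ,
      (∀ W, 0 ≤ lam' W) ∧
      (∀ e : E,
        (∑ W : Finset V, if ¬ (u e ∈ W ↔ v e ∈ W) then lam' W else 0) ≤ a e) ∧
      (∀ X Y : Finset V, lam' X ≠ 0 → lam' Y ≠ 0 → ¬ Crossing X Y) ∧
      (∑ W : Finset V, lam W * f W) ≤ (∑ W : Finset V, lam' W * f W) := by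
  classical
  -- extract the rational values
  set q : Finset V → ℚ := fun W => (hrat W).choose with hqdef
  have hq : ∀ W, lam W = ((q W : ℚ) : ℝ) := fun W => (hrat W).choose_spec
  have hq0 : ∀ W, 0 ≤ q W := by
    intro W
    have := hlam0 W
    rw [hq W] at this
    exact_mod_cast this
  -- common denominator
  set D : ℕ := ∏ W : Finset V, (q W).den with hDdef
  have hD : 0 < D := Finset.prod_pos fun W _ => (q W).den_pos
  have hDne : (D : ℝ) ≠ 0 := by positivity
  have hdvd : ∀ W : Finset V, (q W).den ∣ D :=
    fun W => Finset.dvd_prod_of_mem _ (Finset.mem_univ W)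
  -- the integer multiplicities
  set μ : Finset V → ℕ := fun W => (q W).num.toNat * (D / (q W).den) with hμdef
  have hlm : ∀ W, (μ W : ℝ) = (D : ℝ) * lam W := by
    intro W
    have hd := hdvd W
    have hmul : (D / (q W).den) * (q W).den = D := Nat.div_mul_cancel hd
    have hkne : ((D / (q W).den : ℕ) : ℚ) ≠ 0 := by
      have : 0 < D / (q W).den := Nat.div_pos (Nat.le_of_dvd hD hd) (q W).den_pos
      exact_mod_cast this.ne'
    have key : (μ W : ℚ) / (D : ℚ) = q W := by
      rw [hμdef]
      have hnum : (((q W).num.toNat : ℕ) : ℚ) = ((q W).num : ℚ) := by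
        exact_mod_cast Int.toNat_of_nonneg (Rat.num_nonneg.mpr (hq0 W))
      have : ((((q W).num.toNat * (D / (q W).den) : ℕ) : ℚ))
          = ((D / (q W).den : ℕ) : ℚ) * ((q W).num : ℚ) := by
        push_cast
        rw [hnum]
        ring
      rw [this, show ((D : ℚ)) = ((D / (q W).den : ℕ) : ℚ) * ((q W).den : ℚ) by
        exact_mod_cast hmul.symm]
      rw [mul_div_mul_left _ _ hkne]
      exact Rat.num_div_den (q W)
    have keyR : (μ W : ℝ) / (D : ℝ) = lam W := by
      rw [hq W, ← key]
      push_cast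
      ring
    field_simp at keyR
    linarith [keyR]
  -- feasibility for μ with bound D * a e
  have hfeasμ : ∀ e : E,
      (∑ W : Finset V, (μ W : ℝ) * (if ¬ (u e ∈ W ↔ v e ∈ W) then 1 else 0)) ≤ (D : ℝ) * a e := by
    intro e
    have h1 : (∑ W : Finset V, (μ W : ℝ) * (if ¬ (u e ∈ W ↔ v e ∈ W) then 1 else 0))
        = (D : ℝ) * ∑ W : Finset V, (if ¬ (u e ∈ W ↔ v e ∈ W) then lam W else 0) := by
      rw [Finset.mul_sum]
      refine Finset.sum_congr rfl fun W _ => ?_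
      rw [hlm W]
      split <;> simp <;> ring
    rw [h1]
    exact mul_le_mul_of_nonneg_left (hfeas e) (by positivity)
  obtain ⟨μ', hfeas', hlam', hobj'⟩ :=
    uncross_main u v (fun e => (D : ℝ) * a e) f hf
      (∑ W : Finset V, μ W * (W.card * (Fintype.card V - W.card))) μ le_rfl hfeasμ
  refine ⟨fun W => (μ' W : ℝ) / D, fun W => by positivity, ?_, ?_, ?_⟩
  · intro e
    have h1 : (∑ W : Finset V, (if ¬ (u e ∈ W ↔ v e ∈ W) then (μ' W : ℝ) / D else 0))
        = (∑ W : Finset V, (μ' W : ℝ) * (if ¬ (u e ∈ W ↔ v e ∈ W) then 1 else 0)) / D := by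
      rw [Finset.sum_div]
      refine Finset.sum_congr rfl fun W _ => ?_
      split <;> simp
    rw [h1]
    have := hfeas' e
    have hDpos : (0 : ℝ) < (D : ℝ) := by exact_mod_cast hD
    calc (∑ W : Finset V, (μ' W : ℝ) * (if ¬ (u e ∈ W ↔ v e ∈ W) then 1 else 0)) / D
        ≤ ((D : ℝ) * a e) / D := by
          exact (div_le_div_iff_of_pos_right hDpos).mpr this
      _ = a e := mul_div_cancel_left₀ _ hDne
  · intro X Y hX hY
    refine hlam' X Y ?_ ?_
    · intro h; apply hX; simp [h]
    · intro h; apply hY; simp [h]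
  · have h1 : (∑ W : Finset V, lam W * f W)
        = (∑ W : Finset V, (μ W : ℝ) * f W) / D := by
      rw [Finset.sum_div]
      refine Finset.sum_congr rfl fun W _ => ?_
      rw [hlm W]
      field_simp
    have h2 : (∑ W : Finset V, (μ' W : ℝ) / D * f W)
        = (∑ W : Finset V, (μ' W : ℝ) * f W) / D := by
      rw [Finset.sum_div]
      refine Finset.sum_congr rfl fun W _ => ?_
      ring
    rw [h1, h2]
    have hDpos : (0 : ℝ) < (D : ℝ) := by exact_mod_cast hD
    exact (div_le_div_iff_of_pos_right hDpos).mpr hobj'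
end

section
/- Let V be a finite set with |V| = n ≥ 2, and let F be a family of subsets of V such that every X ∈ F satisfies ∅ ≠ X ≠ V, any two members of F are non-crossing, and no two distinct members X, Y ∈ F determine the same bi-partition (i.e., for distinct X, Y ∈ F, both X ≠ Y and X ≠ V\Y). Then |F| ≤ 2n − 3. -/
open Finset

section Laminar

variable {α : Type*}

def IsLaminar (L : Finset (Finset α)) : Prop :=
  ∀ X ∈ L, ∀ Y ∈ L, X ⊆ Y ∨ Y ⊆ X ∨ Disjoint X Y

theorem IsLaminar.mono {L L' : Finset (Finset α)} (hL : IsLaminar L) (h : L' ⊆ L) :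
    IsLaminar L' :=
  fun X hX Y hY => hL X (h hX) Y (h hY)

variable [DecidableEq α]

theorem card_le_two_mul_sub_one_of_card_erase_le {S : Finset α} {L : Finset (Finset α)}
    (hS : ∀ X ∈ L, X.Nonempty ∧ X ⊆ S) (h : #(L.erase S) ≤ 2 * #S - 2) :
    #L ≤ 2 * #S - 1 := by
  rcases L.eq_empty_or_nonempty with rfl | ⟨X, hX⟩
  · simp
  have hSpos : 0 < #S := card_pos.mpr ((hS X hX).1.mono (hS X hX).2)
  have := pred_card_le_card_erase (s := L) (a := S)
  omega

-- Strengthened form of `IsLaminar.card_le` that the induction on `S` carries.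
theorem IsLaminar.card_erase_le (S : Finset α) :
    ∀ L : Finset (Finset α), IsLaminar L → (∀ X ∈ L, X.Nonempty ∧ X ⊆ S) →
      #(L.erase S) ≤ 2 * #S - 2 := by
  induction S using Finset.strongInduction with
  | H S ih =>
  intro L hL hS
  have card_le_of_ssubset : ∀ T ⊂ S, ∀ L' ⊆ L, (∀ X ∈ L', X ⊆ T) → #L' ≤ 2 * #T - 1 :=
    fun T hT L' hL' hL'T => card_le_two_mul_sub_one_of_card_erase_le
      (fun X hX => ⟨(hS X (hL' hX)).1, hL'T X hX⟩)
      (ih T hT L' (hL.mono hL') fun X hX => ⟨(hS X (hL' hX)).1, hL'T X hX⟩)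
  rcases (L.erase S).eq_empty_or_nonempty with h | hne
  · simp [h]
  obtain ⟨M, hM, hMmax⟩ := (L.erase S).exists_max_image card hne
  obtain ⟨hMS, hML⟩ := mem_erase.mp hM
  have hMssub : M ⊂ S := ssubset_of_subset_of_ne (hS M hML).2 hMS
  -- a member containing `M` is `M` itself, by maximality of its cardinality
  have outside_sub : ∀ Y ∈ L.erase S, ¬Y ⊆ M → Y ⊆ S \ M := by
    intro Y hY hYM
    rcases hL Y (mem_of_mem_erase hY) M hML with h | h | h
    · exact absurd h hYM
    · exact absurd (eq_of_subset_of_card_le h (hMmax Y hY)).ge hYM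
    · exact subset_sdiff.mpr ⟨(hS Y (mem_of_mem_erase hY)).2, h⟩
  have hin := card_le_of_ssubset M hMssub ((L.erase S).filter (· ⊆ M))
    ((filter_subset _ _).trans (erase_subset _ _)) fun X hX => (mem_filter.mp hX).2
  have hout := card_le_of_ssubset (S \ M) (sdiff_ssubset hMssub.subset (hS M hML).1)
    ((L.erase S).filter (¬· ⊆ M)) ((filter_subset _ _).trans (erase_subset _ _))
    fun X hX => outside_sub X (mem_filter.mp hX).1 (mem_filter.mp hX).2
  have hsplit := card_filter_add_card_filter_not (s := L.erase S) (p := (· ⊆ M))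
  have hcard := card_sdiff_add_card_eq_card hMssub.subset
  have hMpos : 0 < #M := card_pos.mpr (hS M hML).1
  have hrest : 0 < #(S \ M) := card_pos.mpr (sdiff_nonempty.mpr (not_subset_of_ssubset hMssub))
  omega

theorem IsLaminar.card_le {S : Finset α} {L : Finset (Finset α)} (hL : IsLaminar L)
    (hS : ∀ X ∈ L, X.Nonempty ∧ X ⊆ S) : #L ≤ 2 * #S - 1 :=
  card_le_two_mul_sub_one_of_card_erase_le hS (hL.card_erase_le S L hS)

end Laminar

section Crossing

variable {V : Type*} [Fintype V] [DecidableEq V]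

theorem crossing_comm {X Y : Finset V} : Crossing X Y ↔ Crossing Y X := by
  unfold Crossing
  rw [inter_comm, union_comm]
  tauto

theorem crossing_compl_left {X Y : Finset V} : Crossing Xᶜ Y ↔ Crossing X Y := by
  unfold Crossing
  rw [show Xᶜ ∩ Y = Y \ X by ext; simp [and_comm], show Xᶜ \ Y = (X ∪ Y)ᶜ by ext; simp,
    show Y \ Xᶜ = X ∩ Y by ext; simp [and_comm], show (Xᶜ ∪ Y)ᶜ = X \ Y by ext; simp]
  tauto

theorem crossing_compl_right {X Y : Finset V} : Crossing X Yᶜ ↔ Crossing X Y := by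
  rw [crossing_comm, crossing_compl_left, crossing_comm]

theorem subset_or_subset_or_disjoint_of_not_crossing {X Y : Finset V} {v : V} (hX : v ∉ X)
    (hY : v ∉ Y) (h : ¬Crossing X Y) : X ⊆ Y ∨ Y ⊆ X ∨ Disjoint X Y := by
  by_contra! hlam
  obtain ⟨hXY, hYX, hdisj⟩ := hlam
  exact h ⟨not_disjoint_iff_nonempty_inter.mp hdisj, sdiff_nonempty.mpr hXY,
    sdiff_nonempty.mpr hYX, ⟨v, by simp [hX, hY]⟩⟩

def avoidingSide (v : V) (X : Finset V) : Finset V :=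
  if v ∈ X then Xᶜ else X

theorem avoidingSide_eq_or (v : V) (X : Finset V) :
    avoidingSide v X = X ∨ avoidingSide v X = Xᶜ := by
  unfold avoidingSide
  split_ifs <;> simp

theorem notMem_avoidingSide (v : V) (X : Finset V) : v ∉ avoidingSide v X := by
  unfold avoidingSide
  split_ifs with h <;> simp [h]

theorem avoidingSide_nonempty (v : V) {X : Finset V} (hX : X.Nonempty) (hXV : X ≠ univ) :
    (avoidingSide v X).Nonempty := by
  rcases avoidingSide_eq_or v X with h | h <;> rw [h]
  · exact hX
  · exact (compl_ne_univ_iff_nonempty Xᶜ).mp (by rwa [compl_compl])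

theorem crossing_avoidingSide_iff (v : V) {X Y : Finset V} :
    Crossing (avoidingSide v X) (avoidingSide v Y) ↔ Crossing X Y := by
  rcases avoidingSide_eq_or v X with hX | hX <;> rcases avoidingSide_eq_or v Y with hY | hY <;>
    simp only [hX, hY, crossing_compl_left, crossing_compl_right]

theorem eq_or_eq_compl_of_avoidingSide_eq (v : V) {X Y : Finset V}
    (h : avoidingSide v X = avoidingSide v Y) : X = Y ∨ X = Yᶜ := by
  rcases avoidingSide_eq_or v X with hX | hX <;> rcases avoidingSide_eq_or v Y with hY | hY <;>
    rw [hX, hY] at h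
  · exact .inl h
  · exact .inr h
  · exact .inr (eq_compl_comm.mpr h.symm)
  · exact .inl (compl_injective h)

end Crossing

theorem laminar_family_card_bound_general {V : Type*} [Fintype V] [DecidableEq V]
    (F : Finset (Finset V))
    (hproper : ∀ X ∈ F, X.Nonempty ∧ X ≠ Finset.univ)
    (hnc : ∀ X ∈ F, ∀ Y ∈ F, ¬ Crossing X Y)
    (hdist : ∀ X ∈ F, ∀ Y ∈ F, X ≠ Y → X ≠ Yᶜ) :
    F.card ≤ 2 * Fintype.card V - 3 := by
  rcases F.eq_empty_or_nonempty with rfl | ⟨X₀, hX₀⟩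
  · simp
  obtain ⟨v, -⟩ := (hproper X₀ hX₀).1
  have hinj : Set.InjOn (avoidingSide v) F := fun X hX Y hY h =>
    (eq_or_eq_compl_of_avoidingSide_eq v h).elim id
      fun hXY => by_contra fun hne => hdist X hX Y hY hne hXY
  have hlam : IsLaminar (F.image (avoidingSide v)) := by
    simp only [IsLaminar, forall_mem_image]
    exact fun X hX Y hY => subset_or_subset_or_disjoint_of_not_crossing
      (notMem_avoidingSide v X) (notMem_avoidingSide v Y)
      ((crossing_avoidingSide_iff v).not.mpr (hnc X hX Y hY))
  have hside : ∀ A ∈ F.image (avoidingSide v), A.Nonempty ∧ A ⊆ univ.erase v := by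
    simp only [forall_mem_image]
    exact fun X hX => ⟨avoidingSide_nonempty v (hproper X hX).1 (hproper X hX).2,
      fun a ha => mem_erase.mpr ⟨fun hav => notMem_avoidingSide v X (hav ▸ ha), mem_univ a⟩⟩
  calc #F = #(F.image (avoidingSide v)) := (card_image_of_injOn hinj).symm
    _ ≤ 2 * #(univ.erase v) - 1 := hlam.card_le hside
    _ = 2 * Fintype.card V - 3 := by rw [card_erase_of_mem (mem_univ v), card_univ]; omega

/-- A laminar family of proper nonempty subsets of an `n`-element set (`n ≥ 2`), with
pairwise distinct bi-partitions, has at most `2n - 3` members. -/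
theorem laminar_family_card_bound {V : Type*} [Fintype V] [DecidableEq V]
    (hn : 2 ≤ Fintype.card V) (F : Finset (Finset V))
    (hproper : ∀ X ∈ F, X.Nonempty ∧ X ≠ Finset.univ)
    (hnc : ∀ X ∈ F, ∀ Y ∈ F, ¬ Crossing X Y)
    (hdist : ∀ X ∈ F, ∀ Y ∈ F, X ≠ Y → X ≠ Yᶜ) :
    F.card ≤ 2 * Fintype.card V - 3 :=
  laminar_family_card_bound_general F hproper hnc hdist
end
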